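/- arXiv:math/9910050 — 3 statements merged into one kernel-verified Lean document; each statement's English description precedes it below -/
import Mathlib

section
/- Suppose that almost surely there exists t ≥ 1 such that f_t ∘ ⋯ ∘ f_1 is a constant function. Then, almost surely, there exists t ≥ 1 such that the backward composition G_t := f_1 ∘ f_2 ∘ ⋯ ∘ f_t is a constant function, and whenever G_t is constant, G_{t'} is the same constant function for every t' ≥ t. Consequently, for every x₀ ∈ S the limit W := lim_{t→∞} G_t(x₀) exists almost surely and its value does not depend on the choice of x₀. -/
open MeasureTheory ProbabilityTheory Filter

noncomputable section

variable {Ω S : Type*}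

/-- Forward composition of the random maps with indices `1, …, t`:
`fwdComp f t ω = f t ω ∘ ⋯ ∘ f 1 ω`. -/
def fwdComp (f : ℕ → Ω → S → S) : ℕ → Ω → S → S
  | 0 => fun _ => id
  | n + 1 => fun ω => f (n + 1) ω ∘ fwdComp f n ω

/-- Backward composition of the random maps with indices `1, …, t`:
`bwdComp f t ω = f 1 ω ∘ f 2 ω ∘ ⋯ ∘ f t ω`. -/
def bwdComp (f : ℕ → Ω → S → S) : ℕ → Ω → S → S
  | 0 => fun _ => id
  | n + 1 => fun ω => bwdComp f n ω ∘ f (n + 1) ω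

/-- A function is constant. -/
def IsConstMap (S : Type*) (g : S → S) : Prop := ∃ c, g = Function.const S c

/-!
Being i.i.d., the tuples `(f 1, …, f t)` and `(f t, …, f 1)` have the same law, and the forward
composition is the backward composition of the reversed tuple; hence for each `t` the forward and
backward compositions are constant with the same probability. Both events increase with `t`
(once `G t` is constant, `G (t + 1) = G t ∘ f (t + 1)` is the same constant), so their unions have
the same probability, which is `1` by hypothesis.
-/

theorem ProbabilityTheory.iIndepFun.identDistrib_precomp {ι β : Type*} [Fintype ι]
    [MeasurableSpace Ω] [MeasurableSpace β] {μ : Measure Ω} {X : ι → Ω → β} (hX : iIndepFun X μ)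
    {σ : ι → ι} (hσ : σ.Injective) (hident : ∀ i, IdentDistrib (X (σ i)) (X i) μ μ) :
    IdentDistrib (fun ω i => X i ω) (fun ω i => X (σ i) ω) μ μ where
  aemeasurable_fst := aemeasurable_pi_lambda _ fun i => (hident i).aemeasurable_snd
  aemeasurable_snd := aemeasurable_pi_lambda _ fun i => (hident i).aemeasurable_fst
  map_eq := by
    rw [hX.map_fun_eq_pi_map fun i => (hident i).aemeasurable_snd,
      (hX.precomp hσ).map_fun_eq_pi_map fun i => (hident i).aemeasurable_fst]
    exact congrArg Measure.pi (funext fun i => (hident i).map_eq.symm)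

theorem ae_exists_mem_of_measure_eq [MeasurableSpace Ω] {μ : Measure Ω} [IsFiniteMeasure μ]
    {A B : ℕ → Set Ω} (hA : Monotone A) (hB : Monotone B)
    (hBm : ∀ t, NullMeasurableSet (B t) μ) (heq : ∀ t, μ (A t) = μ (B t))
    (h : ∀ᵐ ω ∂μ, ∃ t, ω ∈ A t) : ∀ᵐ ω ∂μ, ∃ t, ω ∈ B t := by
  simp only [← Set.mem_iUnion] at h ⊢
  have hA_univ : μ (⋃ t, A t) = μ Set.univ := measure_congr (eventuallyEq_univ.2 h)
  rw [ae_mem_iff_measure_eq (.iUnion hBm), hB.measure_iUnion, ← hA_univ, hA.measure_iUnion]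
  simp only [heq]

theorem List.foldr_comp_id_eq_comp {α : Type*} (l : List (α → α)) (g : α → α) :
    l.foldr (· ∘ ·) g = l.foldr (· ∘ ·) id ∘ g := by
  induction l with
  | nil => rfl
  | cons h l ih => simp only [List.foldr_cons, ih]; rfl

theorem bwdComp_eq_foldr_ofFn (f : ℕ → Ω → S → S) (t : ℕ) (ω : Ω) :
    bwdComp f t ω = (List.ofFn fun i : Fin t => f (i + 1) ω).foldr (· ∘ ·) id := by
  induction t with
  | zero => rfl
  | succ n ih =>
    rw [List.ofFn_succ', List.concat_eq_append, List.foldr_append, List.foldr_cons, List.foldr_nil]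
    simp only [List.foldr_comp_id_eq_comp, Fin.val_castSucc, Fin.val_last, ← ih]
    rfl

theorem fwdComp_eq_foldr_ofFn_rev (f : ℕ → Ω → S → S) (t : ℕ) (ω : Ω) :
    fwdComp f t ω = (List.ofFn fun i : Fin t => f (i.rev + 1) ω).foldr (· ∘ ·) id := by
  induction t with
  | zero => rfl
  | succ n ih =>
    rw [List.ofFn_succ, List.foldr_cons]
    simp only [Fin.rev_succ, Fin.val_castSucc, Fin.rev_zero, Fin.val_last, ← ih]
    rfl

theorem bwdComp_eq_const_of_le {f : ℕ → Ω → S → S} {ω : Ω} {t t' : ℕ} {c : S}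
    (h : bwdComp f t ω = Function.const S c) (ht : t ≤ t') :
    bwdComp f t' ω = Function.const S c := by
  induction t', ht using Nat.le_induction with
  | base => exact h
  | succ n _ ih => exact congrArg (· ∘ f (n + 1) ω) ih

theorem monotone_isConstMap_bwdComp (f : ℕ → Ω → S → S) :
    Monotone fun t => {ω | IsConstMap S (bwdComp f t ω)} :=
  fun _ _ hst _ ⟨c, hc⟩ => ⟨c, bwdComp_eq_const_of_le hc hst⟩

theorem monotone_isConstMap_fwdComp (f : ℕ → Ω → S → S) :
    Monotone fun t => {ω | IsConstMap S (fwdComp f t ω)} := by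
  refine monotone_nat_of_le_succ fun t ω ⟨c, hc⟩ => ⟨f (t + 1) ω c, ?_⟩
  exact congrArg (f (t + 1) ω ∘ ·) hc

section Reversal

variable [MeasurableSpace Ω] {μ : Measure Ω} [Finite S] [MeasurableSpace S]
  [MeasurableSingletonClass S] {f : ℕ → Ω → S → S}

theorem nullMeasurableSet_isConstMap_bwdComp (hident : ∀ n, IdentDistrib (f n) (f 1) μ μ)
    (t : ℕ) : NullMeasurableSet {ω | IsConstMap S (bwdComp f t ω)} μ := by
  simp only [bwdComp_eq_foldr_ofFn]
  exact (aemeasurable_pi_lambda (fun ω (i : Fin t) => f (i + 1) ω)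
    fun _ => (hident _).aemeasurable_fst).nullMeasurableSet_preimage
      (s := {v | IsConstMap S ((List.ofFn v).foldr (· ∘ ·) id)}) .of_discrete

theorem measure_isConstMap_fwdComp_eq_bwdComp (hindep : iIndepFun f μ)
    (hident : ∀ n, IdentDistrib (f n) (f 1) μ μ) (t : ℕ) :
    μ {ω | IsConstMap S (fwdComp f t ω)} = μ {ω | IsConstMap S (bwdComp f t ω)} := by
  have hrev :
      IdentDistrib (fun ω (i : Fin t) => f (i + 1) ω) (fun ω i => f (i.rev + 1) ω) μ μ :=
    (hindep.precomp (g := fun i : Fin t => (i : ℕ) + 1) fun _ _ h => Fin.ext (by simpa using h)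
      ).identDistrib_precomp Fin.rev_injective fun _ => (hident _).trans (hident _).symm
  simp only [bwdComp_eq_foldr_ofFn, fwdComp_eq_foldr_ofFn_rev]
  exact (hrev.measure_mem_eq (s := {v | IsConstMap S ((List.ofFn v).foldr (· ∘ ·) id)})
    .of_discrete).symm

end Reversal

theorem stmt2_general [MeasureSpace Ω]
    [Fintype S] [MeasurableSpace S] [MeasurableSingletonClass S]
    (f : ℕ → Ω → S → S)
    (hindep : iIndepFun f ℙ)
    (hident : ∀ n, IdentDistrib (f n) (f 1) ℙ ℙ)
    (hcoal : ∀ᵐ ω ∂ℙ, ∃ t, 1 ≤ t ∧ IsConstMap S (fwdComp f t ω)) :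
    ∀ᵐ ω ∂ℙ,
      (∃ t, 1 ≤ t ∧ IsConstMap S (bwdComp f t ω)) ∧
      (∀ t c, bwdComp f t ω = Function.const S c →
        ∀ t', t ≤ t' → bwdComp f t' ω = Function.const S c) ∧
      ∃ w : S, ∀ x₀ : S, ∀ᶠ t in atTop, bwdComp f t ω x₀ = w := by
  have := hindep.isProbabilityMeasure
  have hbwd : ∀ᵐ ω ∂ℙ, ∃ t, IsConstMap S (bwdComp f t ω) :=
    ae_exists_mem_of_measure_eq (monotone_isConstMap_fwdComp f) (monotone_isConstMap_bwdComp f)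
      (nullMeasurableSet_isConstMap_bwdComp hident)
      (measure_isConstMap_fwdComp_eq_bwdComp hindep hident)
      (by filter_upwards [hcoal] with ω ⟨t, _, ht⟩ using ⟨t, ht⟩)
  filter_upwards [hbwd] with ω ⟨t, c, hc⟩
  refine ⟨⟨t + 1, Nat.le_add_left 1 t, c, bwdComp_eq_const_of_le hc t.le_succ⟩,
    fun _ _ h _ => bwdComp_eq_const_of_le h, c, fun x₀ => ?_⟩
  filter_upwards [eventually_ge_atTop t] with t' ht'
  rw [bwdComp_eq_const_of_le hc ht', Function.const_apply]

/-- If almost surely some forward composition `f t ∘ ⋯ ∘ f 1` is constant,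
then almost surely some backward composition `G t = f 1 ∘ ⋯ ∘ f t` is constant; whenever
`G t` is constant, `G t'` is the same constant function for all `t' ≥ t`; and consequently
there is a value `w` such that, for every starting state `x₀`, `G t x₀` is eventually
equal to `w` (the limit exists and does not depend on `x₀`). -/
theorem stmt2 [MeasureSpace Ω] [IsProbabilityMeasure (ℙ : Measure Ω)]
    [Fintype S] [Nonempty S] [MeasurableSpace S] [MeasurableSingletonClass S]
    (f : ℕ → Ω → S → S) (hmeas : ∀ n, Measurable (f n))
    (hindep : iIndepFun f ℙ)
    (hident : ∀ n, IdentDistrib (f n) (f 1) ℙ ℙ)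
    (hcoal : ∀ᵐ ω ∂ℙ, ∃ t, 1 ≤ t ∧ IsConstMap S (fwdComp f t ω)) :
    ∀ᵐ ω ∂ℙ,
      (∃ t, 1 ≤ t ∧ IsConstMap S (bwdComp f t ω)) ∧
      (∀ t c, bwdComp f t ω = Function.const S c →
        ∀ t', t ≤ t' → bwdComp f t' ω = Function.const S c) ∧
      ∃ w : S, ∀ x₀ : S, ∀ᶠ t in atTop, bwdComp f t ω x₀ = w :=
  stmt2_general f hindep hident hcoal
end
end

section
/- (The interleaved composite map is coalescent with probability at least 1/2.) Let (f_n)_{n≥1} and (g_n)_{n≥1} be two independent i.i.d. sequences of random maps on S, with f_1 and g_1 identically distributed. Define coalescence times τ_f := inf{t ≥ 1 : f_t ∘ ⋯ ∘ f_1 is constant} and τ_g := inf{t ≥ 1 : g_t ∘ ⋯ ∘ g_1 is constant}, and assume τ_f (equivalently τ_g) is almost surely finite. Then the composite map f_{τ_g} ∘ f_{τ_g−1} ∘ ⋯ ∘ f_1 is a constant function with probability at least 1/2. -/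
/-! The coalescence times `τ_f` and `τ_g` are the same measurable function of the sequences
`(f n)` and `(g n)`, so they are independent and identically distributed. Hence
`P(τ_f ≤ τ_g) = P(τ_g ≤ τ_f)`, and as these two events cover the sample space,
`P(τ_f ≤ τ_g) ≥ 1/2`. Composing a constant map with further maps keeps it constant, so
`f τ_g ∘ ⋯ ∘ f 1` is constant on `{τ_f ≤ τ_g}`, except on the null event where `f` never
coalesces (there the junk value `τ_f = 0` makes `τ_f ≤ τ_g` hold vacuously). -/

open MeasureTheory ProbabilityTheory Filter
open scoped ENNReal

noncomputable section

variable {Ω S : Type*}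

/-- The coalescence time `inf {t ≥ 1 : f t ∘ ⋯ ∘ f 1 is constant}`
(equal to `0` if there is no such `t`). -/
def coalTime (f : ℕ → Ω → S → S) (ω : Ω) : ℕ :=
  sInf {t | 1 ≤ t ∧ IsConstMap S (fwdComp f t ω)}

namespace ProbabilityTheory

variable [MeasurableSpace Ω] {μ : Measure Ω}

theorem half_le_measure_le_of_indepFun_of_identDistrib {α : Type*} [LinearOrder α]
    [MeasurableSpace α] [TopologicalSpace α] [OrderClosedTopology α]
    [SecondCountableTopology α] [OpensMeasurableSpace α] [IsProbabilityMeasure μ]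
    {X Y : Ω → α} (hXY : X ⟂ᵢ[μ] Y) (hid : IdentDistrib X Y μ μ) :
    (1 : ℝ≥0∞) / 2 ≤ μ {ω | X ω ≤ Y ω} := by
  have hX := hid.aemeasurable_fst
  have hY := hid.aemeasurable_snd
  have hle : MeasurableSet {p : α × α | p.1 ≤ p.2} := measurableSet_le'
  have hsymm : μ {ω | Y ω ≤ X ω} = μ {ω | X ω ≤ Y ω} := by
    have hlaw : μ.map (fun ω ↦ (Y ω, X ω)) = μ.map (fun ω ↦ (X ω, Y ω)) := by
      rw [(indepFun_iff_map_prod_eq_prod_map_map hY hX).1 hXY.symm,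
        (indepFun_iff_map_prod_eq_prod_map_map hX hY).1 hXY, hid.map_eq]
    have := congrArg (fun ν : Measure (α × α) ↦ ν {p | p.1 ≤ p.2}) hlaw
    rwa [Measure.map_apply_of_aemeasurable (hY.prodMk hX) hle,
      Measure.map_apply_of_aemeasurable (hX.prodMk hY) hle] at this
  have hcover : (1 : ℝ≥0∞) ≤ μ {ω | X ω ≤ Y ω} + μ {ω | Y ω ≤ X ω} := by
    rw [← measure_univ (μ := μ)]
    refine (measure_mono fun ω _ ↦ ?_).trans (measure_union_le _ _)
    exact (le_total (X ω) (Y ω)).elim Or.inl Or.inr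
  rw [hsymm, ← two_mul] at hcover
  rwa [ENNReal.div_le_iff two_ne_zero ENNReal.ofNat_ne_top, mul_comm]

theorem iIndepFun.indepFun_sumElim {ι κ β : Type*} [MeasurableSpace β]
    {f : ι → Ω → β} {g : κ → Ω → β} (h : iIndepFun (fun i ↦ Sum.elim f g i) μ)
    (hf : ∀ i, Measurable (f i)) (hg : ∀ j, Measurable (g j)) :
    (fun ω i ↦ f i ω) ⟂ᵢ[μ] (fun ω j ↦ g j ω) := by
  have hmeas : ∀ i, Measurable (Sum.elim f g i) := Sum.rec hf hg
  have hind := indep_iSup_of_disjoint (fun i ↦ (hmeas i).comap_le)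
    ((iIndepFun_iff_iIndep _ _ _).1 h) Set.isCompl_range_inl_range_inr.disjoint
  rw [IndepFun_iff_Indep]
  refine indep_of_indep_of_le hind ?_ ?_
  · simp_rw [MeasurableSpace.pi, MeasurableSpace.comap_iSup, MeasurableSpace.comap_comp]
    exact iSup_le fun i ↦ le_iSup₂_of_le (Sum.inl i) ⟨i, rfl⟩ le_rfl
  · simp_rw [MeasurableSpace.pi, MeasurableSpace.comap_iSup, MeasurableSpace.comap_comp]
    exact iSup_le fun j ↦ le_iSup₂_of_le (Sum.inr j) ⟨j, rfl⟩ le_rfl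

theorem identDistrib_pi_of_iIndepFun {ι : Type*} {𝓧 : ι → Type*} [∀ i, MeasurableSpace (𝓧 i)]
    {X Y : ∀ i, Ω → 𝓧 i} (hX : iIndepFun X μ) (hY : iIndepFun Y μ)
    (hXm : ∀ i, Measurable (X i)) (hYm : ∀ i, Measurable (Y i))
    (hid : ∀ i, IdentDistrib (X i) (Y i) μ μ) :
    IdentDistrib (fun ω i ↦ X i ω) (fun ω i ↦ Y i ω) μ μ where
  aemeasurable_fst := (measurable_pi_iff.2 hXm).aemeasurable
  aemeasurable_snd := (measurable_pi_iff.2 hYm).aemeasurable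
  map_eq := by
    rw [hX.map_fun_eq_infinitePi_map hXm, hY.map_fun_eq_infinitePi_map hYm]
    simp_rw [(hid _).map_eq]

end ProbabilityTheory

theorem measurable_sInf_setOf_nat {α : Type*} [MeasurableSpace α] {p : ℕ → α → Prop}
    (hp : ∀ n, Measurable (p n)) : Measurable fun x ↦ sInf {n | p n x} := by
  classical
  have hex : ∀ x, ∃ n, p n x ∨ ∀ m, ¬ p m x := fun x ↦ by
    by_cases h : ∃ n, p n x
    · exact h.imp fun _ ↦ Or.inl
    · exact ⟨0, Or.inr (not_exists.1 h)⟩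
  -- Padding `p · x` by "never true" makes `Nat.find` total and returns `0 = sInf ∅` there.
  have hfind : ∀ x, sInf {n | p n x} = Nat.find (hex x) := fun x ↦ by
    refine Eq.trans ?_ ((Nat.sInf_def (hex x)).trans (by congr))
    by_cases h : ∃ n, p n x
    · simp only [not_forall_not.2 h, or_false]
      rfl
    · simp only [not_exists.1 h, not_false_eq_true, implies_true, or_true, Set.ofPred_false,
        Nat.sInf_empty]
      exact (Nat.sInf_eq_zero.2 (Or.inl (show 0 ∈ Set.univ from trivial))).symm
  simp_rw [hfind]
  exact measurable_find hex fun n ↦ ((hp n).or (.forall fun m ↦ (hp m).not)).setOf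

namespace IsConstMap

theorem comp_left {g : S → S} (h : IsConstMap S g) (k : S → S) : IsConstMap S (k ∘ g) := by
  obtain ⟨c, rfl⟩ := h
  exact ⟨k c, rfl⟩

end IsConstMap

theorem isConstMap_fwdComp_of_le (f : ℕ → Ω → S → S) (ω : Ω) {s t : ℕ} (hst : s ≤ t)
    (h : IsConstMap S (fwdComp f s ω)) : IsConstMap S (fwdComp f t ω) := by
  induction t, hst using Nat.le_induction with
  | base => exact h
  | succ t _ ih => exact ih.comp_left (f (t + 1) ω)

theorem isConstMap_fwdComp_of_coalTime_le (f : ℕ → Ω → S → S) (ω : Ω)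
    (hfin : ∃ t, 1 ≤ t ∧ IsConstMap S (fwdComp f t ω)) {t : ℕ} (ht : coalTime f ω ≤ t) :
    IsConstMap S (fwdComp f t ω) :=
  isConstMap_fwdComp_of_le f ω ht (Nat.sInf_mem hfin).2

theorem fwdComp_eq_fwdComp_eval (f : ℕ → Ω → S → S) (t : ℕ) (ω : Ω) :
    fwdComp f t ω = fwdComp (fun n x ↦ x n) t (fun n ↦ f n ω) := by
  induction t with
  | zero => rfl
  | succ t ih => exact congrArg (f (t + 1) ω ∘ ·) ih

theorem coalTime_eq_comp (f : ℕ → Ω → S → S) :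
    coalTime f = coalTime (fun n (x : ℕ → S → S) ↦ x n) ∘ fun ω n ↦ f n ω := by
  funext ω
  simp only [coalTime, Function.comp_apply, fwdComp_eq_fwdComp_eval f]

section Measurability

variable [MeasurableSpace Ω] [Finite S] [MeasurableSpace S] [MeasurableSingletonClass S]

theorem measurable_fwdComp {f : ℕ → Ω → S → S} (hf : ∀ n, Measurable (f n)) (t : ℕ) :
    Measurable (fwdComp f t) := by
  induction t with
  | zero => exact measurable_const
  | succ t ih =>
    exact (measurable_of_countable fun p : (S → S) × (S → S) ↦ p.1 ∘ p.2).comp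
      ((hf (t + 1)).prodMk ih)

theorem measurable_coalTime {f : ℕ → Ω → S → S} (hf : ∀ n, Measurable (f n)) :
    Measurable (coalTime f) :=
  measurable_sInf_setOf_nat fun t ↦ measurable_const.and
    ((measurable_of_countable (IsConstMap S)).comp (measurable_fwdComp hf t))

end Measurability

theorem stmt10_general [MeasureSpace Ω] [IsProbabilityMeasure (ℙ : Measure Ω)]
    [Fintype S] [MeasurableSpace S] [MeasurableSingletonClass S]
    (f g : ℕ → Ω → S → S)
    (hmeasf : ∀ n, Measurable (f n)) (hmeasg : ∀ n, Measurable (g n))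
    (hindep : iIndepFun (fun i : ℕ ⊕ ℕ => Sum.elim f g i) ℙ)
    (hident : ∀ i : ℕ ⊕ ℕ, IdentDistrib (Sum.elim f g i) (f 1) ℙ ℙ)
    (hfin : ∀ᵐ ω ∂ℙ, ∃ t, 1 ≤ t ∧ IsConstMap S (fwdComp f t ω)) :
    (1 : ℝ≥0∞) / 2 ≤ ℙ {ω | IsConstMap S (fwdComp f (coalTime g ω) ω)} := by
  have hτ : Measurable (coalTime fun n (x : ℕ → S → S) ↦ x n) :=
    measurable_coalTime measurable_pi_apply
  have hseq : IdentDistrib (fun ω n ↦ f n ω) (fun ω n ↦ g n ω) ℙ ℙ :=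
    identDistrib_pi_of_iIndepFun (hindep.precomp (g := Sum.inl) Sum.inl_injective)
      (hindep.precomp (g := Sum.inr) Sum.inr_injective) hmeasf hmeasg
      fun n ↦ (hident (.inl n)).trans (hident (.inr n)).symm
  have hcoal : (1 : ℝ≥0∞) / 2 ≤ ℙ {ω | coalTime f ω ≤ coalTime g ω} := by
    rw [coalTime_eq_comp f, coalTime_eq_comp g]
    exact half_le_measure_le_of_indepFun_of_identDistrib
      ((hindep.indepFun_sumElim hmeasf hmeasg).comp hτ hτ) (hseq.comp hτ)
  exact hcoal.trans <| measure_mono_ae <|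
    hfin.mono fun ω hω hle ↦ isConstMap_fwdComp_of_coalTime_le f ω hω hle

/-- The interleaved composite map is coalescent with probability at
least 1/2: for two independent i.i.d. sequences of random maps `(f n)` and `(g n)`,
with `f 1` and `g 1` identically distributed and almost surely finite coalescence time
`τ_f` (equivalently `τ_g`), the composite map `f τ_g ∘ f (τ_g - 1) ∘ ⋯ ∘ f 1` is a
constant function with probability at least 1/2. -/
theorem stmt10 [MeasureSpace Ω] [IsProbabilityMeasure (ℙ : Measure Ω)]
    [Fintype S] [Nonempty S] [MeasurableSpace S] [MeasurableSingletonClass S]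
    (f g : ℕ → Ω → S → S)
    (hmeasf : ∀ n, Measurable (f n)) (hmeasg : ∀ n, Measurable (g n))
    (hindep : iIndepFun (fun i : ℕ ⊕ ℕ => Sum.elim f g i) ℙ)
    (hident : ∀ i : ℕ ⊕ ℕ, IdentDistrib (Sum.elim f g i) (f 1) ℙ ℙ)
    (hfin : ∀ᵐ ω ∂ℙ, ∃ t, 1 ≤ t ∧ IsConstMap S (fwdComp f t ω)) :
    (1 : ℝ≥0∞) / 2 ≤ ℙ {ω | IsConstMap S (fwdComp f (coalTime g ω) ω)} :=
  stmt10_general f g hmeasf hmeasg hindep hident hfin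
end
end

section
/- (Submultiplicativity of coalescence tails.) Define the coalescence time τ := inf{t ≥ 1 : f_t ∘ ⋯ ∘ f_1 is a constant function} (with τ = ∞ if no such t exists). Then for all integers s, t ≥ 1, P(τ > s + t) ≤ P(τ > s) · P(τ > t). -/
open MeasureTheory ProbabilityTheory Filter
open scoped ENNReal

noncomputable section

variable {Ω S : Type*}

/-- The coalescence time `τ := inf {t ≥ 1 : f t ∘ ⋯ ∘ f 1 is constant}`, with
`τ = ∞` (i.e. `⊤ : ℕ∞`) if there is no such `t`. -/
def coalTimeE (f : ℕ → Ω → S → S) (ω : Ω) : ℕ∞ :=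
  sInf ((fun n : ℕ => (n : ℕ∞)) '' {n | 1 ≤ n ∧ IsConstMap S (fwdComp f n ω)})

/-! Write `F_n = f_n ∘ ⋯ ∘ f_1`. Since `F_{s+t} = (f_{s+t} ∘ ⋯ ∘ f_{s+1}) ∘ F_s`, if `F_{s+t}` is
not constant then neither is `F_s` nor the composition of the block `f_{s+1}, …, f_{s+t}`. The
two events are determined by disjoint blocks of the i.i.d. sequence, hence independent, and the
second has probability `P(τ > t)` because that block has the same law as `f_1, …, f_t`. -/

section Blocks

variable {β : Type*} [MeasurableSpace Ω] [MeasurableSpace β] {μ : Measure Ω}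

def seqBlock (X : ℕ → Ω → β) (a t : ℕ) (ω : Ω) (i : Fin t) : β := X (a + i + 1) ω

theorem measurable_seqBlock {X : ℕ → Ω → β} (hX : ∀ n, Measurable (X n)) (a t : ℕ) :
    Measurable (seqBlock X a t) :=
  measurable_pi_lambda _ fun _ => hX _

theorem identDistrib_seqBlock {X : ℕ → Ω → β} (hX : ∀ n, Measurable (X n))
    (hindep : iIndepFun X μ) (hident : ∀ m n, IdentDistrib (X m) (X n) μ μ) (a b t : ℕ) :
    IdentDistrib (seqBlock X a t) (seqBlock X b t) μ μ := by
  have map_seqBlock (c : ℕ) : μ.map (seqBlock X c t) = Measure.pi fun _ => μ.map (X 0) := by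
    have hinj : (fun i : Fin t => c + i + 1).Injective := fun i j h => by
      simpa [Fin.ext_iff] using h
    change μ.map (fun ω (i : Fin t) => X (c + i + 1) ω) = _
    rw [(hindep.precomp hinj).map_fun_eq_pi_map fun _ => (hX _).aemeasurable]
    simp_rw [(hident _ 0).map_eq]
  exact ⟨(measurable_seqBlock hX a t).aemeasurable, (measurable_seqBlock hX b t).aemeasurable,
    by rw [map_seqBlock, map_seqBlock]⟩

theorem indepFun_seqBlock {X : ℕ → Ω → β} (hX : ∀ n, Measurable (X n)) (hindep : iIndepFun X μ)
    {a b : ℕ} (s t : ℕ) (hab : a + s ≤ b) :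
    IndepFun (seqBlock X a s) (seqBlock X b t) μ := by
  have hdisj : Disjoint (Finset.Ioc a (a + s)) (Finset.Ioc b (b + t)) := by
    rw [Finset.disjoint_left]
    intro k hk hk'
    rw [Finset.mem_Ioc] at hk hk'
    omega
  exact (hindep.indepFun_finset _ _ hdisj hX).comp
    (φ := fun x (i : Fin s) => x ⟨a + i + 1, Finset.mem_Ioc.mpr ⟨by omega, by omega⟩⟩)
    (ψ := fun x (i : Fin t) => x ⟨b + i + 1, Finset.mem_Ioc.mpr ⟨by omega, by omega⟩⟩)
    (measurable_pi_lambda _ fun _ => measurable_pi_apply _)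
    (measurable_pi_lambda _ fun _ => measurable_pi_apply _)

end Blocks

def tupleComp : {t : ℕ} → (Fin t → S → S) → S → S
  | 0, _ => id
  | t + 1, g => g (Fin.last t) ∘ tupleComp (Fin.init g)

theorem fwdComp_add (f : ℕ → Ω → S → S) (ω : Ω) (s : ℕ) :
    ∀ t, fwdComp f (s + t) ω = tupleComp (seqBlock f s t ω) ∘ fwdComp f s ω
  | 0 => rfl
  | t + 1 => by
    rw [← add_assoc]
    exact congrArg (f (s + t + 1) ω ∘ ·) (fwdComp_add f ω s t)

theorem fwdComp_eq_tupleComp (f : ℕ → Ω → S → S) (ω : Ω) (t : ℕ) :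
    fwdComp f t ω = tupleComp (seqBlock f 0 t ω) := by
  have h := fwdComp_add f ω 0 t
  rw [Nat.zero_add] at h
  exact h

theorem IsConstMap.comp_left_s11 {g : S → S} (hg : IsConstMap S g) (h : S → S) :
    IsConstMap S (h ∘ g) := by
  obtain ⟨c, rfl⟩ := hg
  exact ⟨h c, rfl⟩

theorem IsConstMap.comp_right {g : S → S} (hg : IsConstMap S g) (h : S → S) :
    IsConstMap S (g ∘ h) := by
  obtain ⟨c, rfl⟩ := hg
  exact ⟨c, rfl⟩

theorem IsConstMap.fwdComp_of_le {f : ℕ → Ω → S → S} {ω : Ω} {m n : ℕ} (hmn : m ≤ n)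
    (hm : IsConstMap S (fwdComp f m ω)) : IsConstMap S (fwdComp f n ω) := by
  obtain ⟨k, rfl⟩ := Nat.exists_eq_add_of_le hmn
  rw [fwdComp_add]
  exact hm.comp_left_s11 _

theorem coalTimeE_le_iff {f : ℕ → Ω → S → S} {ω : Ω} {n : ℕ} (hn : 1 ≤ n) :
    coalTimeE f ω ≤ n ↔ IsConstMap S (fwdComp f n ω) := by
  rw [← ENat.lt_add_one_iff (ENat.natCast_ne_top n), coalTimeE, sInf_lt_iff]
  constructor
  · rintro ⟨_, ⟨m, ⟨-, hm⟩, rfl⟩, hmn⟩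
    exact hm.fwdComp_of_le
      (Nat.cast_le.mp ((ENat.lt_add_one_iff (ENat.natCast_ne_top n)).mp hmn))
  · intro h
    exact ⟨n, ⟨n, ⟨hn, h⟩, rfl⟩, (ENat.lt_add_one_iff (ENat.natCast_ne_top n)).mpr le_rfl⟩

theorem setOf_lt_coalTimeE (f : ℕ → Ω → S → S) {n : ℕ} (hn : 1 ≤ n) :
    {ω | (n : ℕ∞) < coalTimeE f ω} = seqBlock f 0 n ⁻¹' {g | ¬ IsConstMap S (tupleComp g)} := by
  ext ω
  rw [Set.mem_ofPred_eq, ← not_le, coalTimeE_le_iff hn, fwdComp_eq_tupleComp]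
  rfl

theorem setOf_add_lt_coalTimeE_subset (f : ℕ → Ω → S → S) {s t : ℕ} (hs : 1 ≤ s) :
    {ω | ((s + t : ℕ) : ℕ∞) < coalTimeE f ω} ⊆
      seqBlock f 0 s ⁻¹' {g | ¬ IsConstMap S (tupleComp g)} ∩
        seqBlock f s t ⁻¹' {g | ¬ IsConstMap S (tupleComp g)} := by
  intro ω hω
  rw [Set.mem_ofPred_eq, ← not_le, coalTimeE_le_iff (by omega), fwdComp_add f ω s t,
    fwdComp_eq_tupleComp] at hω
  exact ⟨fun h => hω (h.comp_left_s11 _), fun h => hω (h.comp_right _)⟩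

theorem stmt11_general [MeasureSpace Ω]
    [Fintype S] [MeasurableSpace S] [MeasurableSingletonClass S]
    (f : ℕ → Ω → S → S) (hmeas : ∀ n, Measurable (f n))
    (hindep : iIndepFun f ℙ)
    (hident : ∀ n, IdentDistrib (f n) (f 1) ℙ ℙ)
    (s t : ℕ) (hs : 1 ≤ s) (ht : 1 ≤ t) :
    ℙ {ω | ((s + t : ℕ) : ℕ∞) < coalTimeE f ω} ≤
      ℙ {ω | (s : ℕ∞) < coalTimeE f ω} * ℙ {ω | (t : ℕ∞) < coalTimeE f ω} := by
  set N : (k : ℕ) → Set (Fin k → S → S) := fun _ => {g | ¬ IsConstMap S (tupleComp g)}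
  calc ℙ {ω | ((s + t : ℕ) : ℕ∞) < coalTimeE f ω}
      ≤ ℙ (seqBlock f 0 s ⁻¹' N s ∩ seqBlock f s t ⁻¹' N t) :=
        measure_mono (setOf_add_lt_coalTimeE_subset f hs)
    _ = ℙ (seqBlock f 0 s ⁻¹' N s) * ℙ (seqBlock f s t ⁻¹' N t) :=
        (indepFun_seqBlock hmeas hindep s t (Nat.zero_add s).le).measure_inter_preimage_eq_mul _ _
          (Set.to_countable _).measurableSet (Set.to_countable _).measurableSet
    _ = ℙ {ω | (s : ℕ∞) < coalTimeE f ω} * ℙ {ω | (t : ℕ∞) < coalTimeE f ω} := by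
        rw [setOf_lt_coalTimeE f hs, setOf_lt_coalTimeE f ht,
          (identDistrib_seqBlock hmeas hindep (fun m n => (hident m).trans (hident n).symm) s 0 t
            ).measure_mem_eq (Set.to_countable _).measurableSet]

/-- Submultiplicativity of coalescence tails: for the coalescence
time `τ` of an i.i.d. sequence of random maps, `P(τ > s+t) ≤ P(τ > s) * P(τ > t)`
for all integers `s, t ≥ 1`. -/
theorem stmt11 [MeasureSpace Ω] [IsProbabilityMeasure (ℙ : Measure Ω)]
    [Fintype S] [Nonempty S] [MeasurableSpace S] [MeasurableSingletonClass S]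
    (f : ℕ → Ω → S → S) (hmeas : ∀ n, Measurable (f n))
    (hindep : iIndepFun f ℙ)
    (hident : ∀ n, IdentDistrib (f n) (f 1) ℙ ℙ)
    (s t : ℕ) (hs : 1 ≤ s) (ht : 1 ≤ t) :
    ℙ {ω | ((s + t : ℕ) : ℕ∞) < coalTimeE f ω} ≤
      ℙ {ω | (s : ℕ∞) < coalTimeE f ω} * ℙ {ω | (t : ℕ∞) < coalTimeE f ω} :=
  stmt11_general f hmeas hindep hident s t hs ht
end
end
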